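/- arXiv:2007.13883 — 3 statements merged into one kernel-verified Lean document; each statement's English description precedes it below -/
import Mathlib

section
/- Let p ≥ 1 be an integer and Γ a natural number with Γ < p. The ECH index function I : D → ℤ is injective, and its image is exactly the set of even natural numbers {2k : k ∈ ℕ}; equivalently, for every natural number k there is a unique pair (m₋, m₊) ∈ D with I(m₋, m₊) = 2k. (This is the arithmetic content of the paper's computation that the embedded contact homology of the lens space L(p,1) in the class Γ is ℤ₂ in every even nonnegative grading and 0 otherwise.) -/
/-- The ECH index of the generator `e₋^{mm} e₊^{mp}` (with `mm, mp` the multiplicities of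
the elliptic orbits `e₋, e₊`) relative to `e₋^Γ`, for the prequantization bundle of Euler
class `-p` over `S²`: `I = p·d² + 2(Γ+1)·d + mp − mm + Γ` where `d = (mm + mp − Γ)/p`. -/
def echIndexS2 (p Γ mm mp : ℕ) : ℤ :=
  (p : ℤ) * (((mm + mp - Γ) / p : ℕ) : ℤ) ^ 2
    + 2 * ((Γ : ℤ) + 1) * (((mm + mp - Γ) / p : ℕ) : ℤ)
    + (mp : ℤ) - (mm : ℤ) + (Γ : ℤ)

/-- `echT p Γ d` is the maximal half-index at "degree" `d`. -/
private def echT (p Γ : ℕ) : ℕ → ℕ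
  | 0 => Γ
  | d + 1 => echT p Γ d + p * (d + 1) + Γ + 1

private lemma echT_cast (p Γ : ℕ) : ∀ d : ℕ,
    2 * (echT p Γ d : ℤ) = p * d ^ 2 + p * d + 2 * (Γ + 1) * d + 2 * Γ
  | 0 => by simp [echT]
  | d + 1 => by
      have ih := echT_cast p Γ d
      simp only [echT]
      push_cast
      linear_combination ih

private lemma le_echT (p Γ : ℕ) : ∀ d : ℕ, Γ + p * d ≤ echT p Γ d
  | 0 => by simp [echT]
  | d + 1 => by
      have := le_echT p Γ d
      simp only [echT]
      omega

private lemma echT_gap (p Γ : ℕ) : ∀ {d d' : ℕ}, d < d' →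
    echT p Γ d + Γ + p * d' + 1 ≤ echT p Γ d' := by
  intro d d' h
  induction d' with
  | zero => omega
  | succ n ih =>
      rcases Nat.lt_succ_iff_lt_or_eq.mp h with h' | h'
      · have := ih h'
        have hpn : p * n ≤ p * (n + 1) := Nat.mul_le_mul_left p (by omega)
        simp only [echT]
        omega
      · subst h'
        simp only [echT]
        omega

private lemma exD (p Γ : ℕ) (k : ℕ) :
    ∃ d, k ≤ echT p Γ d ∧ echT p Γ d ≤ k + (Γ + p * d) := by
  induction k with
  | zero => exact ⟨0, by simp [echT], by simp [echT]⟩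
  | succ k ih =>
      obtain ⟨d, h1, h2⟩ := ih
      by_cases hc : k + 1 ≤ echT p Γ d
      · exact ⟨d, hc, by omega⟩
      · have hk : echT p Γ d = k := by omega
        refine ⟨d + 1, ?_, ?_⟩ <;> simp only [echT, hk] <;> omega

private lemma d_unique (p Γ k : ℕ) {d d' : ℕ}
    (h1 : k ≤ echT p Γ d) (h2 : echT p Γ d ≤ k + (Γ + p * d))
    (h1' : k ≤ echT p Γ d') (h2' : echT p Γ d' ≤ k + (Γ + p * d')) :
    d = d' := by
  rcases lt_trichotomy d d' with h | h | h
  · have := echT_gap p Γ h; omega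
  · exact h
  · have := echT_gap p Γ h; omega

private lemma indexA (p Γ mm mp : ℕ) (hp : 1 ≤ p) (hΓ : Γ < p)
    (h : mm + mp ≡ Γ [MOD p]) :
    mm + mp = Γ + p * ((mm + mp - Γ) / p) ∧
      echIndexS2 p Γ mm mp
        = 2 * ((echT p Γ ((mm + mp - Γ) / p) : ℤ) - mm) := by
  have hle : Γ ≤ mm + mp := by
    by_contra hlt
    push_neg at hlt
    have h1 : (mm + mp) % p = mm + mp := Nat.mod_eq_of_lt (lt_trans hlt hΓ)
    have h2 : Γ % p = Γ := Nat.mod_eq_of_lt hΓ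
    unfold Nat.ModEq at h
    omega
  have hdvd : p ∣ (mm + mp - Γ) := (Nat.modEq_iff_dvd' hle).mp h.symm
  have hsum : mm + mp = Γ + p * ((mm + mp - Γ) / p) := by
    rw [Nat.mul_div_cancel' hdvd]; omega
  refine ⟨hsum, ?_⟩
  set d := (mm + mp - Γ) / p with hd
  have hcast := echT_cast p Γ d
  have hsz : (mm : ℤ) + (mp : ℤ) = (Γ : ℤ) + (p : ℤ) * (d : ℤ) := by
    exact_mod_cast hsum
  unfold echIndexS2
  rw [← hd]
  linear_combination hsz - hcast

private lemma indexB (p Γ k d : ℕ) (hp : 1 ≤ p) (hΓ : Γ < p)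
    (h1 : k ≤ echT p Γ d) (h2 : echT p Γ d ≤ k + (Γ + p * d)) :
    (echT p Γ d - k) + (Γ + p * d - (echT p Γ d - k)) ≡ Γ [MOD p] ∧
      echIndexS2 p Γ (echT p Γ d - k) (Γ + p * d - (echT p Γ d - k)) = 2 * k := by
  set mm := echT p Γ d - k with hmm
  set mp := Γ + p * d - mm with hmp
  have hmmle : mm ≤ Γ + p * d := by omega
  have hsum : mm + mp = Γ + p * d := by omega
  have hmod : mm + mp ≡ Γ [MOD p] := by
    show (mm + mp) % p = Γ % p
    rw [hsum]
    exact Nat.add_mul_mod_self_left Γ p d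
  refine ⟨hmod, ?_⟩
  obtain ⟨hs, hidx⟩ := indexA p Γ mm mp hp hΓ hmod
  have hdq : (mm + mp - Γ) / p = d := by
    have : mm + mp - Γ = p * d := by omega
    rw [this, Nat.mul_div_cancel_left d hp]
  rw [hdq] at hidx
  rw [hidx, hmm]
  push_cast [Nat.cast_sub h1]
  ring

/-- The ECH index is injective on the set `D` of pairs of multiplicities whose total is
congruent to `Γ` mod `p`, and its image is exactly the even natural numbers; equivalently,
for every `k : ℕ` there is a unique pair in `D` of index `2k`. -/
theorem echIndexS2_injOn_image_even (p Γ : ℕ) (hp : 1 ≤ p) (hΓ : Γ < p) :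
    Set.InjOn (fun m : ℕ × ℕ => echIndexS2 p Γ m.1 m.2)
        {m : ℕ × ℕ | m.1 + m.2 ≡ Γ [MOD p]} ∧
      (fun m : ℕ × ℕ => echIndexS2 p Γ m.1 m.2) ''
          {m : ℕ × ℕ | m.1 + m.2 ≡ Γ [MOD p]} =
        {n : ℤ | ∃ k : ℕ, n = 2 * k} ∧
      ∀ k : ℕ, ∃! m : ℕ × ℕ,
        m.1 + m.2 ≡ Γ [MOD p] ∧ echIndexS2 p Γ m.1 m.2 = 2 * k := by
  -- a pair in `D` determines the data `(d, k)` with `k ≤ echT d ≤ k + Γ + p*d`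
  have hdata : ∀ m : ℕ × ℕ, m.1 + m.2 ≡ Γ [MOD p] →
      ∀ d : ℕ, d = (m.1 + m.2 - Γ) / p →
        m.1 ≤ echT p Γ d ∧ m.1 + m.2 = Γ + p * d ∧
          echIndexS2 p Γ m.1 m.2 = 2 * ((echT p Γ d - m.1 : ℕ) : ℤ) := by
    intro m hm d hd
    obtain ⟨hs, hidx⟩ := indexA p Γ m.1 m.2 hp hΓ hm
    rw [← hd] at hs hidx
    have hle : m.1 ≤ echT p Γ d := le_trans (by omega) (le_echT p Γ d)
    refine ⟨hle, hs, ?_⟩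
    rw [hidx]
    push_cast [Nat.cast_sub hle]
    ring
  have huniq : ∀ k : ℕ, ∃! m : ℕ × ℕ,
      m.1 + m.2 ≡ Γ [MOD p] ∧ echIndexS2 p Γ m.1 m.2 = 2 * k := by
    intro k
    obtain ⟨d, h1, h2⟩ := exD p Γ k
    obtain ⟨hmod, hidx⟩ := indexB p Γ k d hp hΓ h1 h2
    refine ⟨(echT p Γ d - k, Γ + p * d - (echT p Γ d - k)), ⟨hmod, hidx⟩, ?_⟩
    rintro ⟨a, b⟩ ⟨hm, hi⟩
    obtain ⟨hle', hs', hidx'⟩ := hdata (a, b) hm _ rfl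
    set d' := ((a, b).1 + (a, b).2 - Γ) / p with hd'
    have hk' : echT p Γ d' - a = k := by
      have : ((echT p Γ d' - a : ℕ) : ℤ) = (k : ℤ) := by
        rw [hidx'] at hi; linarith
      exact_mod_cast this
    simp only at hs' hle' hk'
    have h1' : k ≤ echT p Γ d' := by omega
    have h2' : echT p Γ d' ≤ k + (Γ + p * d') := by omega
    have hdd : d = d' := d_unique p Γ k h1 h2 h1' h2'
    rw [← hdd] at hk' hs' hle'
    refine Prod.ext ?_ ?_ <;> simp <;> omega
  refine ⟨?_, ?_, huniq⟩
  · intro a ha b hb hab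
    simp only [Set.mem_setOf_eq] at ha hb
    obtain ⟨halea, -, hia⟩ := hdata a ha _ rfl
    set da := (a.1 + a.2 - Γ) / p
    set k := echT p Γ da - a.1 with hk
    have hia' : echIndexS2 p Γ a.1 a.2 = 2 * (k : ℤ) := hia
    have hib' : echIndexS2 p Γ b.1 b.2 = 2 * (k : ℤ) := by
      simp only at hab; rw [← hab]; exact hia'
    exact (huniq k).unique ⟨ha, hia'⟩ ⟨hb, hib'⟩
  · ext n
    simp only [Set.mem_image, Set.mem_setOf_eq]
    constructor
    · rintro ⟨m, hm, rfl⟩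
      obtain ⟨-, -, hidx⟩ := hdata m hm _ rfl
      exact ⟨_, hidx⟩
    · rintro ⟨k, rfl⟩
      obtain ⟨m, ⟨hm, hidx⟩, -⟩ := huniq k
      exact ⟨m, hm, hidx⟩
end

section
/- Let p ≥ 1 be an integer and Γ a natural number with Γ < p. If (m₋, m₊) and (m₋', m₊') belong to D and m₋ + m₊ < m₋' + m₊', then I(m₋, m₊) < I(m₋', m₊'); that is, the ECH index strictly separates the lines of constant total multiplicity in D. -/
lemma echIndexS2_total (p Γ s : ℕ) (hp : 1 ≤ p) (hΓ : Γ < p) (h : s ≡ Γ [MOD p]) :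
    Γ ≤ s ∧ s = Γ + p * ((s - Γ) / p) := by
  have hmod : s % p = Γ := by
    have := h.symm
    unfold Nat.ModEq at this
    rw [Nat.mod_eq_of_lt hΓ] at this
    exact this.symm
  have hle : Γ ≤ s := hmod ▸ Nat.mod_le s p
  have hdvd : p ∣ s - Γ := (Nat.modEq_iff_dvd' hle).mp h.symm
  refine ⟨hle, ?_⟩
  rw [Nat.mul_div_cancel' hdvd]
  omega

/-- The ECH index strictly separates the lines of constant total multiplicity in `D`:
if two pairs in `D` have totals `mm + mp < mm' + mp'`, then the index of the first is
strictly smaller than the index of the second. -/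
theorem echIndexS2_strict_separation (p Γ : ℕ) (hp : 1 ≤ p) (hΓ : Γ < p)
    (mm mp mm' mp' : ℕ)
    (h : mm + mp ≡ Γ [MOD p]) (h' : mm' + mp' ≡ Γ [MOD p])
    (hlt : mm + mp < mm' + mp') :
    echIndexS2 p Γ mm mp < echIndexS2 p Γ mm' mp' := by
  obtain ⟨hle, heq⟩ := echIndexS2_total p Γ (mm + mp) hp hΓ h
  obtain ⟨hle', heq'⟩ := echIndexS2_total p Γ (mm' + mp') hp hΓ h'
  set d := (mm + mp - Γ) / p with hd
  set d' := (mm' + mp' - Γ) / p with hd'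
  have hdd : d < d' := by
    by_contra hc
    push_neg at hc
    have : p * d' ≤ p * d := Nat.mul_le_mul_left p hc
    omega
  unfold echIndexS2
  rw [← hd, ← hd']
  have hP : (1 : ℤ) ≤ (p : ℤ) := by exact_mod_cast hp
  have hD : (d : ℤ) + 1 ≤ (d' : ℤ) := by exact_mod_cast hdd
  have hE : (mm : ℤ) + (mp : ℤ) = (Γ : ℤ) + (p : ℤ) * (d : ℤ) := by exact_mod_cast heq
  have hE' : (mm' : ℤ) + (mp' : ℤ) = (Γ : ℤ) + (p : ℤ) * (d' : ℤ) := by exact_mod_cast heq'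
  have h0 : (0 : ℤ) ≤ (mm : ℤ) := Int.ofNat_nonneg mm
  have h1 : (0 : ℤ) ≤ (mp : ℤ) := Int.ofNat_nonneg mp
  have h2 : (0 : ℤ) ≤ (mm' : ℤ) := Int.ofNat_nonneg mm'
  have h3 : (0 : ℤ) ≤ (mp' : ℤ) := Int.ofNat_nonneg mp'
  have h4 : (0 : ℤ) ≤ (Γ : ℤ) := Int.ofNat_nonneg Γ
  have h5 : (0 : ℤ) ≤ (d : ℤ) := Int.ofNat_nonneg d
  nlinarith [mul_nonneg (mul_nonneg (sub_nonneg.mpr hP) (by linarith : (0:ℤ) ≤ (d':ℤ) + (d:ℤ))) (by linarith : (0:ℤ) ≤ (d':ℤ) - (d:ℤ) - 1),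
    mul_nonneg (by linarith : (0:ℤ) ≤ (p:ℤ) * ((d':ℤ) + (d:ℤ))) (by linarith : (0:ℤ) ≤ (d':ℤ) - (d:ℤ) - 1),
    mul_nonneg h4 (by linarith : (0:ℤ) ≤ (d':ℤ) - (d:ℤ) - 1)]
end

section
/- (Combinatorial stability of ECH.) Fix natural numbers g ≥ 1, p ≥ 1, and Γ with Γ < p. Consider the set G of admissible tuples t = (m₋, S, m₊) with m₋, m₊ ∈ ℕ and S a subset of a fixed 2g-element set, subject to the condition that p divides m₋ + |S| + m₊ − Γ; for t ∈ G set M(t) := m₋ + |S| + m₊, d(t) := (M(t) − Γ)/p ∈ ℕ, and define the grading I(t) := p·d(t)² + (2 − 2g + 2Γ − p)·d(t) + |S| + 2m₊ ∈ ℤ. Then there exists an integer i₀ such that for every integer i ≥ i₀ the set {t ∈ G : I(t) = i} is finite with exactly 2^{2g−1} elements. (This is the combinatorial content of the corollary that ECH_*(Y, ξ, Γ) ≅ ℤ₂^{2^{2g−1}} for all sufficiently large gradings, since the ECH differential vanishes.) -/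
/-- The grading of an admissible tuple `t = (mm, S, mp)` (multiplicities of `e₋`, the set
of hyperbolic orbits, and `e₊`) relative to `e₋^Γ`, for the prequantization bundle of Euler
class `-p` over a genus-`g` surface:
`I(t) = p·d² + (2 − 2g + 2Γ − p)·d + |S| + 2·mp`, where `d = (mm + |S| + mp − Γ)/p`. -/
def tupleIndex (g p Γ : ℕ) (t : ℕ × Finset (Fin (2 * g)) × ℕ) : ℤ :=
  (p : ℤ) * (((t.1 + t.2.1.card + t.2.2 - Γ) / p : ℕ) : ℤ) ^ 2
    + ((2 : ℤ) - 2 * (g : ℤ) + 2 * (Γ : ℤ) - (p : ℤ))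
      * (((t.1 + t.2.1.card + t.2.2 - Γ) / p : ℕ) : ℤ)
    + (t.2.1.card : ℤ) + 2 * (t.2.2 : ℤ)

namespace ECHStab

def c (g p Γ : ℕ) : ℤ := 2 - 2*(g:ℤ) + 2*(Γ:ℤ) - (p:ℤ)

def f (g p Γ : ℕ) (d : ℕ) : ℤ := (p:ℤ) * (d:ℤ)^2 + c g p Γ * (d:ℤ)

lemma f_even (g p Γ : ℕ) (d : ℕ) : 2 ∣ f g p Γ d := by
  have h : f g p Γ d = (p:ℤ) * ((d:ℤ) * ((d:ℤ)+1)) + (c g p Γ - p) * d := by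
    unfold f; ring
  rw [h]
  have h1 : (2:ℤ) ∣ (d:ℤ) * ((d:ℤ)+1) := (Int.even_mul_succ_self (d:ℤ)).two_dvd
  have h2 : (2:ℤ) ∣ (c g p Γ - p) := ⟨1 - g + Γ - p, by unfold c; ring⟩
  exact dvd_add (Dvd.dvd.mul_left h1 _) (h2.mul_right _)

lemma f_gap (g p Γ : ℕ) (d : ℕ) :
    f g p Γ (d+1) = f g p Γ d + ((p:ℤ)*(2*(d:ℤ)+1) + c g p Γ) := by
  unfold f; push_cast; ring

lemma f_succ_F (g p Γ : ℕ) (d : ℕ) :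
    f g p Γ (d+1) + 2*(g:ℤ) - 2 = f g p Γ d + 2*((Γ:ℤ) + (p:ℤ)*(d:ℤ)) := by
  unfold f c; push_cast; ring

lemma gap_ge (g p Γ : ℕ) (hp : 1 ≤ p) (d : ℕ) (hd : 2*g + 2*p + 2*Γ + 4 ≤ d) :
    2*(g:ℤ) + 2 ≤ (p:ℤ)*(2*(d:ℤ)+1) + c g p Γ := by
  unfold c
  have hp' : (1:ℤ) ≤ (p:ℤ) := by exact_mod_cast hp
  have hd' : 2*(g:ℤ) + 2*(p:ℤ) + 2*(Γ:ℤ) + 4 ≤ (d:ℤ) := by exact_mod_cast hd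
  have hΓ' : (0:ℤ) ≤ (Γ:ℤ) := Int.natCast_nonneg Γ
  have hg' : (0:ℤ) ≤ (g:ℤ) := Int.natCast_nonneg g
  nlinarith [mul_le_mul_of_nonneg_left hd' (by linarith : (0:ℤ) ≤ 2*(p:ℤ))]

lemma f_mono (g p Γ : ℕ) (hp : 1 ≤ p) :
    ∀ a b : ℕ, 2*g + 2*p + 2*Γ + 4 ≤ a → a ≤ b → f g p Γ a ≤ f g p Γ b := by
  intro a b ha hab
  induction b, hab using Nat.le_induction with
  | base => exact le_refl _
  | succ n hn ih =>
    have h2 := f_gap g p Γ n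
    have h3 := gap_ge g p Γ hp n (by omega)
    have hg' : (0:ℤ) ≤ (g:ℤ) := Int.natCast_nonneg g
    linarith

lemma index_eq (g p Γ : ℕ) (hp : 1 ≤ p) (t : ℕ × Finset (Fin (2*g)) × ℕ) (d : ℕ)
    (hM : t.1 + t.2.1.card + t.2.2 = Γ + p * d) :
    tupleIndex g p Γ t = f g p Γ d + (t.2.1.card : ℤ) + 2 * (t.2.2 : ℤ) := by
  unfold tupleIndex f c
  have h1 : t.1 + t.2.1.card + t.2.2 - Γ = p * d := by omega
  rw [h1, Nat.mul_div_cancel_left _ hp]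

lemma cong_iff (p Γ M : ℕ) (hΓ : Γ < p) :
    M ≡ Γ [MOD p] ↔ ∃ d, M = Γ + p * d := by
  constructor
  · intro h
    have h' : M % p = Γ % p := h
    have hΓm : Γ % p = Γ := Nat.mod_eq_of_lt hΓ
    have hle : Γ ≤ M := by
      rcases Nat.lt_or_ge M p with h1 | h1
      · have : M % p = M := Nat.mod_eq_of_lt h1
        omega
      · omega
    have hd : p ∣ M - Γ := (Nat.modEq_iff_dvd' hle).mp h.symm
    obtain ⟨k, hk⟩ := hd
    refine ⟨k, ?_⟩
    have : M = Γ + (M - Γ) := by omega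
    rw [this, hk]
  · rintro ⟨d, rfl⟩
    show (Γ + p * d) % p = Γ % p
    simp [Nat.add_mul_mod_self_left]

lemma card_filter_parity (n : ℕ) (hn : 1 ≤ n) (r : ℤ) :
    ((Finset.univ : Finset (Finset (Fin (2*n)))).filter
      (fun S => ((S.card : ℤ) - r) % 2 = 0)).card = 2 ^ (2*n - 1) := by
  have h2n : 0 < 2*n := by omega
  let x₀ : Fin (2*n) := ⟨0, h2n⟩
  let τ : Finset (Fin (2*n)) → Finset (Fin (2*n)) :=
    fun S => if x₀ ∈ S then S.erase x₀ else insert x₀ S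
  have hcardτ : ∀ S, ((τ S).card : ℤ) = if x₀ ∈ S then (S.card : ℤ) - 1 else (S.card : ℤ) + 1 := by
    intro S
    by_cases h : x₀ ∈ S
    · simp only [τ, if_pos h]
      rw [Finset.card_erase_of_mem h]
      have : 1 ≤ S.card := Finset.card_pos.mpr ⟨x₀, h⟩
      push_cast [this]
      ring
    · simp only [τ, if_neg h]
      rw [Finset.card_insert_of_notMem h]
      push_cast
      ring
  have hττ : ∀ S, τ (τ S) = S := by
    intro S
    by_cases h : x₀ ∈ S
    · have h2 : x₀ ∉ S.erase x₀ := Finset.notMem_erase _ _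
      simp only [τ, if_pos h, if_neg h2]
      exact Finset.insert_erase h
    · have h2 : x₀ ∈ insert x₀ S := Finset.mem_insert_self _ _
      simp only [τ, if_neg h, if_pos h2]
      exact Finset.erase_insert h
  have hcards : ((Finset.univ : Finset (Finset (Fin (2*n)))).filter
        (fun S => ((S.card : ℤ) - r) % 2 = 0)).card
      = ((Finset.univ : Finset (Finset (Fin (2*n)))).filter
        (fun S => ¬ ((S.card : ℤ) - r) % 2 = 0)).card := by
    apply Finset.card_bij' (fun S _ => τ S) (fun S _ => τ S)
    · intro a ha
      simp only [Finset.mem_filter, Finset.mem_univ, true_and] at ha ⊢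
      have := hcardτ a
      by_cases h : x₀ ∈ a <;> simp only [h, if_true, if_false] at this <;> omega
    · intro a ha
      simp only [Finset.mem_filter, Finset.mem_univ, true_and] at ha ⊢
      have := hcardτ a
      by_cases h : x₀ ∈ a <;> simp only [h, if_true, if_false] at this <;> omega
    · intro a _; exact hττ a
    · intro a _; exact hττ a
  have htot := Finset.card_filter_add_card_filter_not
    (s := (Finset.univ : Finset (Finset (Fin (2*n)))))
    (p := fun S => ((S.card : ℤ) - r) % 2 = 0)
  have huniv : (Finset.univ : Finset (Finset (Fin (2*n)))).card = 2 ^ (2*n) := by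
    rw [Finset.card_univ]
    simp [Fintype.card_finset]
  have hpow : 2 ^ (2*n) = 2 ^ (2*n-1) * 2 := by
    rw [← pow_succ]
    congr 1
    omega
  omega

end ECHStab

set_option maxHeartbeats 1000000

/-- Combinatorial stability of ECH: there is an integer `i₀` such that for every grading
`i ≥ i₀`, the set of admissible tuples in the class `Γ` (total multiplicity congruent to
`Γ` mod `p`) of grading `i` is finite with exactly `2^(2g−1)` elements. -/
theorem ech_stability (g p Γ : ℕ) (hg : 1 ≤ g) (hp : 1 ≤ p) (hΓ : Γ < p) :
    ∃ i₀ : ℤ, ∀ i : ℤ, i₀ ≤ i →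
      ({t : ℕ × Finset (Fin (2 * g)) × ℕ |
          t.1 + t.2.1.card + t.2.2 ≡ Γ [MOD p] ∧ tupleIndex g p Γ t = i}).Finite ∧
      Set.ncard {t : ℕ × Finset (Fin (2 * g)) × ℕ |
          t.1 + t.2.1.card + t.2.2 ≡ Γ [MOD p] ∧ tupleIndex g p Γ t = i}
        = 2 ^ (2 * g - 1) := by
  set d₀ : ℕ := 2*g + 2*p + 2*Γ + 4 with hd₀def
  refine ⟨(4*(p:ℤ) + 2*(g:ℤ) + 2*(Γ:ℤ) + 4) * ((d₀:ℤ)+2)^2 + 1, ?_⟩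
  intro i hi
  have hp' : (1:ℤ) ≤ (p:ℤ) := by exact_mod_cast hp
  have hg' : (1:ℤ) ≤ (g:ℤ) := by exact_mod_cast hg
  have hΓ' : (0:ℤ) ≤ (Γ:ℤ) := Int.natCast_nonneg Γ
  have hΓp : (Γ:ℤ) < (p:ℤ) := by exact_mod_cast hΓ
  -- bound on F e for small e
  have hF_bound : ∀ e : ℕ, e ≤ d₀ + 1 →
      ECHStab.f g p Γ e + 2*((Γ:ℤ) + (p:ℤ)*(e:ℤ)) ≤ i - 1 := by
    intro e he
    have he' : (e:ℤ) ≤ (d₀:ℤ) + 1 := by exact_mod_cast he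
    have he0 : (0:ℤ) ≤ (e:ℤ) := Int.natCast_nonneg e
    have hd0 : (d₀:ℤ) = 2*(g:ℤ) + 2*(p:ℤ) + 2*(Γ:ℤ) + 4 := by
      rw [hd₀def]; push_cast; ring
    unfold ECHStab.f ECHStab.c
    nlinarith [mul_self_le_mul_self he0 (by linarith : (e:ℤ) ≤ (d₀:ℤ) + 2),
      mul_le_mul_of_nonneg_left (by linarith : (e:ℤ) ≤ (d₀:ℤ)+2) hΓ',
      mul_le_mul_of_nonneg_left (by linarith : (e:ℤ) ≤ (d₀:ℤ)+2) (by linarith : (0:ℤ) ≤ (p:ℤ)),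
      sq_nonneg ((d₀:ℤ)+2), mul_le_mul_of_nonneg_left
        (mul_self_le_mul_self he0 (by linarith : (e:ℤ) ≤ (d₀:ℤ) + 2))
        (by linarith : (0:ℤ) ≤ (p:ℤ))]
  -- existence of a level beyond i
  have h_ex : ∃ d : ℕ, i < ECHStab.f g p Γ (d+1) := by
    refine ⟨i.toNat + 2*g + 2*p + 2*Γ + 2, ?_⟩
    have h1 : i ≤ (i.toNat : ℤ) := Int.self_le_toNat i
    have ht0 : (0:ℤ) ≤ (i.toNat : ℤ) := Int.natCast_nonneg _
    unfold ECHStab.f ECHStab.c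
    push_cast
    nlinarith [sq_nonneg ((i.toNat:ℤ) + 2*g + 2*p + 2*Γ + 3),
      mul_le_mul_of_nonneg_right hp'
        (sq_nonneg ((i.toNat:ℤ) + 2*g + 2*p + 2*Γ + 3)),
      mul_le_mul_of_nonneg_left
        (by linarith : (1:ℤ) ≤ (i.toNat:ℤ) + 2*g + 2*p + 2*Γ + 3)
        (by linarith : (0:ℤ) ≤ (i.toNat:ℤ) + (p:ℤ) + 4*(Γ:ℤ) + 5)]
  obtain ⟨ds, hlt, hmin⟩ : ∃ ds : ℕ, i < ECHStab.f g p Γ (ds + 1) ∧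
      ∀ e, e < ds → ¬ i < ECHStab.f g p Γ (e + 1) :=
    ⟨Nat.find h_ex, Nat.find_spec h_ex, fun e he => Nat.find_min h_ex he⟩
  have hds_ge : d₀ + 1 ≤ ds := by
    by_contra h
    have h1 := hF_bound (ds+1) (by omega)
    have h2 : (0:ℤ) ≤ 2*((Γ:ℤ) + (p:ℤ)*(((ds+1 : ℕ)):ℤ)) := by positivity
    linarith
  have hds1 : ds - 1 + 1 = ds := by omega
  have hge : ECHStab.f g p Γ ds ≤ i := by
    have h := hmin (ds - 1) (by omega)
    rw [hds1] at h
    omega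
  have hgapS : ECHStab.f g p Γ ds + (2*(g:ℤ)+2) ≤ ECHStab.f g p Γ (ds+1) := by
    have h1 := ECHStab.f_gap g p Γ ds
    have h2 := ECHStab.gap_ge g p Γ hp ds (by omega)
    linarith
  have hgapS' : ECHStab.f g p Γ (ds-1) + (2*(g:ℤ)+2) ≤ ECHStab.f g p Γ ds := by
    have h1 := ECHStab.f_gap g p Γ (ds-1)
    have h2 := ECHStab.gap_ge g p Γ hp (ds-1) (by omega)
    rw [hds1] at h1
    linarith
  -- multiplicities of the two relevant levels
  obtain ⟨Mn, hMn⟩ : ∃ M : ℕ, M = Γ + p * ds := ⟨_, rfl⟩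
  obtain ⟨Mn', hMn'⟩ : ∃ M : ℕ, M = Γ + p * (ds - 1) := ⟨_, rfl⟩
  have hMnZ : ((Mn:ℕ):ℤ) = (Γ:ℤ) + (p:ℤ)*(ds:ℤ) := by rw [hMn]; push_cast; ring
  have hMn'Z : ((Mn':ℕ):ℤ) = (Γ:ℤ) + (p:ℤ)*(((ds - 1 : ℕ)):ℤ) := by
    rw [hMn']; push_cast; ring
  have hMM : Mn = Mn' + p := by
    rw [hMn, hMn']
    conv_lhs => rw [← hds1]
    rw [Nat.mul_succ]
    exact (Nat.add_assoc _ _ _).symm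
  have hFS : ECHStab.f g p Γ (ds+1) + 2*(g:ℤ) - 2 = ECHStab.f g p Γ ds + 2*(Mn:ℤ) := by
    rw [ECHStab.f_succ_F g p Γ ds, hMnZ]
  have hFS' : ECHStab.f g p Γ ds + 2*(g:ℤ) - 2 = ECHStab.f g p Γ (ds-1) + 2*(Mn':ℤ) := by
    have h := ECHStab.f_succ_F g p Γ (ds-1)
    rw [hds1] at h
    rw [h, hMn'Z]
  -- parity of f
  obtain ⟨k, hk⟩ := ECHStab.f_even g p Γ ds
  obtain ⟨k', hk'⟩ := ECHStab.f_even g p Γ (ds-1)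
  -- the two j-values
  obtain ⟨jn, hjn⟩ : ∃ j : ℕ, j = (i - ECHStab.f g p Γ ds).toNat := ⟨_, rfl⟩
  obtain ⟨jn', hjn'⟩ : ∃ j : ℕ, j = (i - ECHStab.f g p Γ (ds-1)).toNat := ⟨_, rfl⟩
  have hjnk : (jn:ℤ) = i - 2*k := by
    rw [hjn, Int.toNat_of_nonneg (by linarith), hk]
  have hjn'k : (jn':ℤ) = i - 2*k' := by
    rw [hjn', Int.toNat_of_nonneg (by linarith), hk']
  have hkk : 2*k' + 2*(g:ℤ) + 2 ≤ 2*k := by rw [hk, hk'] at hgapS'; linarith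
  have hFSk : 2*k + 2*(Mn:ℤ) - 2*(g:ℤ) + 2 = ECHStab.f g p Γ (ds+1) := by
    rw [← hk]; linarith
  have hupk : i ≤ 2*k + 2*(Mn:ℤ) - 2*(g:ℤ) + 1 := by
    have := hlt; rw [← hFSk] at this; linarith
  have hFS'k : 2*k + 2*(g:ℤ) - 2 = 2*k' + 2*(Mn':ℤ) := by
    rw [hk, hk'] at hFS'; linarith
  -- the target finset and the map
  obtain ⟨target, htarget⟩ : ∃ T : Finset (Finset (Fin (2*g))),
      T = (Finset.univ : Finset (Finset (Fin (2*g)))).filter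
        (fun S => ((S.card : ℤ) - i) % 2 = 0) := ⟨_, rfl⟩
  obtain ⟨Ψ, hΨ⟩ : ∃ F : Finset (Fin (2*g)) → ℕ × Finset (Fin (2*g)) × ℕ,
      F = fun S => if S.card ≤ jn then
        (Mn - S.card - (jn - S.card)/2, S, (jn - S.card)/2)
      else
        (Mn' - Sᶜ.card - (jn' - Sᶜ.card)/2, Sᶜ, (jn' - Sᶜ.card)/2) := ⟨_, rfl⟩
  -- arithmetic packs
  have hcard2g : ∀ S : Finset (Fin (2*g)), S.card ≤ 2*g := by
    intro S
    simpa using Finset.card_le_univ S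
  have hpack1 : ∀ S : Finset (Fin (2*g)), ((S.card:ℤ) - i) % 2 = 0 → S.card ≤ jn →
      (jn - S.card) % 2 = 0 ∧ S.card + (jn - S.card)/2 ≤ Mn := by
    intro S hpar hle
    have hs2g := hcard2g S
    omega
  have hpack2 : ∀ S : Finset (Fin (2*g)), ((S.card:ℤ) - i) % 2 = 0 → ¬ (S.card ≤ jn) →
      (jn' - Sᶜ.card) % 2 = 0 ∧ Sᶜ.card + (jn' - Sᶜ.card)/2 ≤ Mn' ∧ Sᶜ.card ≤ jn' := by
    intro S hpar hgt
    have hs2g := hcard2g S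
    have hcompl : (Sᶜ).card = 2*g - S.card := by
      rw [Finset.card_compl, Fintype.card_fin]
    omega
  -- forward: image of target lands in the set
  have hmem : ∀ S ∈ target, Ψ S ∈ {t : ℕ × Finset (Fin (2 * g)) × ℕ |
      t.1 + t.2.1.card + t.2.2 ≡ Γ [MOD p] ∧ tupleIndex g p Γ t = i} := by
    intro S hS
    rw [htarget] at hS
    have hpar : ((S.card:ℤ) - i) % 2 = 0 := (Finset.mem_filter.mp hS).2
    by_cases h : S.card ≤ jn
    · have hp1 := hpack1 S hpar h
      have hsum : (Mn - S.card - (jn - S.card)/2) + S.card + (jn - S.card)/2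
          = Γ + p * ds := by rw [← hMn]; omega
      simp only [hΨ, if_pos h, Set.mem_setOf_eq]
      constructor
      · exact (ECHStab.cong_iff p Γ _ hΓ).mpr ⟨ds, hsum⟩
      · refine (ECHStab.index_eq g p Γ hp _ ds hsum).trans ?_
        show ECHStab.f g p Γ ds + ((S.card : ℕ):ℤ) + 2*(((jn - S.card)/2 : ℕ):ℤ) = i
        rw [hk]
        omega
    · have hp2 := hpack2 S hpar h
      have hsum : (Mn' - Sᶜ.card - (jn' - Sᶜ.card)/2) + Sᶜ.card + (jn' - Sᶜ.card)/2
          = Γ + p * (ds - 1) := by rw [← hMn']; omega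
      simp only [hΨ, if_neg h, Set.mem_setOf_eq]
      constructor
      · exact (ECHStab.cong_iff p Γ _ hΓ).mpr ⟨ds - 1, hsum⟩
      · refine (ECHStab.index_eq g p Γ hp _ (ds-1) hsum).trans ?_
        show ECHStab.f g p Γ (ds-1) + ((Sᶜ.card : ℕ):ℤ) + 2*(((jn' - Sᶜ.card)/2 : ℕ):ℤ) = i
        rw [hk']
        omega
  -- backward: every element of the set is in the image
  have hsurj : ∀ t : ℕ × Finset (Fin (2 * g)) × ℕ,
      (t.1 + t.2.1.card + t.2.2 ≡ Γ [MOD p] ∧ tupleIndex g p Γ t = i) →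
      ∃ S ∈ target, Ψ S = t := by
    rintro ⟨mm, S, mp⟩ ⟨hcong, hidx⟩
    obtain ⟨d, hMd⟩ := (ECHStab.cong_iff p Γ _ hΓ).mp hcong
    have hidx' : ECHStab.f g p Γ d + (S.card : ℤ) + 2*(mp:ℤ) = i := by
      rw [ECHStab.index_eq g p Γ hp (mm, S, mp) d hMd] at hidx
      exact hidx
    have hs2g := hcard2g S
    obtain ⟨Mt, hMt⟩ : ∃ M : ℕ, M = Γ + p * d := ⟨_, rfl⟩
    rw [← hMt] at hMd
    have hMtZ : ((Mt:ℕ):ℤ) = (Γ:ℤ) + (p:ℤ)*(d:ℤ) := by rw [hMt]; push_cast; ring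
    have hMd2 : mm + S.card + mp = Mt := hMd
    have hMdZ : (mm:ℤ) + (S.card:ℤ) + (mp:ℤ) = (Mt:ℤ) := by exact_mod_cast hMd2
    have hlow : ECHStab.f g p Γ d ≤ i := by
      have h1 : (0:ℤ) ≤ (S.card:ℤ) := Int.natCast_nonneg _
      have h2 : (0:ℤ) ≤ (mp:ℤ) := Int.natCast_nonneg _
      linarith
    have hhigh : i + (S.card:ℤ) ≤ ECHStab.f g p Γ d + 2*(Mt:ℤ) := by
      have h1 : (0:ℤ) ≤ (mm:ℤ) := Int.natCast_nonneg _
      linarith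
    have hd_big : d₀ + 2 ≤ d := by
      by_contra h
      have h1 := hF_bound d (by omega)
      rw [← hMtZ] at h1
      have h2 : (0:ℤ) ≤ (S.card:ℤ) := Int.natCast_nonneg _
      linarith
    have hd_le : d ≤ ds := by
      by_contra h
      have h1 : ECHStab.f g p Γ (ds+1) ≤ ECHStab.f g p Γ d :=
        ECHStab.f_mono g p Γ hp (ds+1) d (by omega) (by omega)
      linarith
    have hds_le : ds ≤ d + 1 := by
      by_contra hcon
      refine hmin (d+1) (by omega) ?_
      have hgapd : ECHStab.f g p Γ (d+1) + (2*(g:ℤ)+2) ≤ ECHStab.f g p Γ (d+1+1) := by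
        have h1 := ECHStab.f_gap g p Γ (d+1)
        have h2 := ECHStab.gap_ge g p Γ hp (d+1) (by omega)
        linarith
      have hFd : ECHStab.f g p Γ (d+1) + 2*(g:ℤ) - 2 = ECHStab.f g p Γ d + 2*(Mt:ℤ) := by
        rw [ECHStab.f_succ_F g p Γ d, hMtZ]
      have h2 : (0:ℤ) ≤ (S.card:ℤ) := Int.natCast_nonneg _
      linarith
    have hcases : d = ds ∨ d = ds - 1 := by omega
    rcases hcases with hd | hd
    · rw [hd] at hidx' hMt
      have hMnMt : Mn = Mt := by rw [hMn, hMt]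
      have hidxk : 2*k + (S.card : ℤ) + 2*(mp:ℤ) = i := by rw [← hk]; exact hidx'
      have hpar : ((S.card:ℤ) - i) % 2 = 0 := by omega
      refine ⟨S, by rw [htarget]; exact Finset.mem_filter.mpr ⟨Finset.mem_univ _, hpar⟩, ?_⟩
      have hle : S.card ≤ jn := by omega
      simp only [hΨ, if_pos hle, Prod.mk.injEq]
      refine ⟨by omega, trivial, by omega⟩
    · subst hd
      have hMnMt : Mn' = Mt := by rw [hMn', hMt]
      have hidxk : 2*k' + (S.card : ℤ) + 2*(mp:ℤ) = i := by rw [← hk']; exact hidx'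
      have hcompl : (Sᶜ).card = 2*g - S.card := by
        rw [Finset.card_compl, Fintype.card_fin]
      have hpar : (((Sᶜ).card:ℤ) - i) % 2 = 0 := by omega
      refine ⟨Sᶜ, by rw [htarget]; exact Finset.mem_filter.mpr ⟨Finset.mem_univ _, hpar⟩, ?_⟩
      have hgt : ¬ ((Sᶜ).card ≤ jn) := by omega
      simp only [hΨ, if_neg hgt, compl_compl, Prod.mk.injEq]
      have hccompl : (Sᶜᶜ).card = S.card := by rw [compl_compl]
      refine ⟨by omega, trivial, by omega⟩
  -- injectivity on target
  have hinj : Set.InjOn Ψ ↑target := by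
    intro S hS T hT heq
    have hS' : S ∈ target := hS
    have hT' : T ∈ target := hT
    rw [htarget] at hS' hT'
    have hparS : ((S.card:ℤ) - i) % 2 = 0 := (Finset.mem_filter.mp hS').2
    have hparT : ((T.card:ℤ) - i) % 2 = 0 := (Finset.mem_filter.mp hT').2
    by_cases h1 : S.card ≤ jn <;> by_cases h2 : T.card ≤ jn
    · simp only [hΨ, if_pos h1, if_pos h2, Prod.mk.injEq] at heq
      exact heq.2.1
    · simp only [hΨ, if_pos h1, if_neg h2, Prod.mk.injEq] at heq
      exfalso
      have hp1 := hpack1 S hparS h1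
      have hp2 := hpack2 T hparT h2
      have hc : S.card = (Tᶜ).card := by rw [heq.2.1]
      have he1 := heq.1
      have he3 := heq.2.2
      omega
    · simp only [hΨ, if_neg h1, if_pos h2, Prod.mk.injEq] at heq
      exfalso
      have hp1 := hpack1 T hparT h2
      have hp2 := hpack2 S hparS h1
      have hc : (Sᶜ).card = T.card := by rw [heq.2.1]
      have he1 := heq.1
      have he3 := heq.2.2
      omega
    · simp only [hΨ, if_neg h1, if_neg h2, Prod.mk.injEq] at heq
      have := heq.2.1
      calc S = Sᶜᶜ := (compl_compl S).symm
        _ = Tᶜᶜ := by rw [this]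
        _ = T := compl_compl T
  -- assemble
  have hAeq : {t : ℕ × Finset (Fin (2 * g)) × ℕ |
      t.1 + t.2.1.card + t.2.2 ≡ Γ [MOD p] ∧ tupleIndex g p Γ t = i}
      = ↑(target.image Ψ) := by
    ext t
    simp only [Set.mem_setOf_eq, Finset.coe_image, Set.mem_image, Finset.mem_coe]
    constructor
    · intro ht
      obtain ⟨S, hS, hΨS⟩ := hsurj t ht
      exact ⟨S, hS, hΨS⟩
    · rintro ⟨S, hS, rfl⟩
      exact hmem S hS
  rw [hAeq]
  refine ⟨(target.image Ψ).finite_toSet, ?_⟩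
  rw [Set.ncard_coe_finset, Finset.card_image_of_injOn hinj, htarget,
    ECHStab.card_filter_parity g hg i]
end
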